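/- Let H be a complex Hilbert space, M ⊆ B(H) a von Neumann algebra, and (p_λ)_{λ∈Λ} a family of mutually orthogonal cyclic projections in M (p_λ p_μ = 0 for λ ≠ μ). Then for every x ∈ M and every λ ∈ Λ, the sets {μ ∈ Λ : p_λ x p_μ ≠ 0} and {μ ∈ Λ : p_μ x p_λ ≠ 0} are countable. -/

import Mathlib

/-!
If `ξ` generates `p_λ`, then every `y ∈ M` with `y ξ = 0` satisfies `y p_λ = 0`: `y` commutes
with `M'`, so it kills `M'ξ` and hence its closure `p_λ H`. Applied to `y = p_μ x`, this shows
that `p_μ x p_λ ≠ 0` forces `p_μ (x ξ) ≠ 0`. The vectors `p_μ (x ξ)` are pairwise orthogonal,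
so by Bessel's inequality only countably many of them are nonzero. The other set is the first
one for `x*`, since `(p_λ x p_μ)* = p_μ x* p_λ`.
-/

set_option synthInstance.maxHeartbeats 1000000
set_option maxHeartbeats 1000000

noncomputable section

namespace Paper

open scoped ComplexConjugate

variable {H : Type*} [NormedAddCommGroup H] [InnerProductSpace ℂ H] [CompleteSpace H]

variable (M : VonNeumannAlgebra H)

/-- The von Neumann algebra `M` regarded as a closed subspace of `B(H)`;
its subtype `↥(carrier M)` is the Banach space `M`. -/
def carrier : Submodule ℂ (H →L[ℂ] H) := M.toStarSubalgebra.toSubalgebra.toSubmodule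

theorem mem_carrier {x : H →L[ℂ] H} : x ∈ carrier M ↔ x ∈ M := Iff.rfl

instance (priority := 10000) : NormedAddCommGroup ↥(carrier M) := inferInstance
instance (priority := 10000) : NormedSpace ℂ ↥(carrier M) := inferInstance
instance (priority := 10000) : NormedAddCommGroup (↥(carrier M) →L[ℂ] ℂ) := inferInstance
instance (priority := 10000) : NormedSpace ℂ (↥(carrier M) →L[ℂ] ℂ) := inferInstance
instance (priority := 10000) : ContinuousAdd (↥(carrier M) →L[ℂ] ℂ) := by
  have h : IsTopologicalAddGroup (↥(carrier M) →L[ℂ] ℂ) := inferInstance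
  exact h.toContinuousAdd

/-- The vector functional `ω_{ξ,η} : x ↦ ⟪x ξ, η⟫` (inner product linear in the first slot,
i.e. `⟪u, v⟫ = inner v u` in Mathlib's convention), as a continuous linear functional on `M`. -/
def vecFunctional (ξ η : H) : ↥(carrier M) →L[ℂ] ℂ :=
  (innerSL ℂ η).comp ((ContinuousLinearMap.apply ℂ H ξ).comp (carrier M).subtypeL)

theorem vecFunctional_apply (ξ η : H) (x : ↥(carrier M)) :
    vecFunctional M ξ η x = inner ℂ η ((x : H →L[ℂ] H) ξ) := rfl

/-- The predual `M_*` of `M`: the norm-closed linear span, inside the dual of `M`,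
of the vector functionals `ω_{ξ,η}`. -/
def predual : Submodule ℂ (↥(carrier M) →L[ℂ] ℂ) :=
  (Submodule.span ℂ {φ | ∃ ξ η : H, φ = vecFunctional M ξ η}).topologicalClosure

theorem vecFunctional_mem_predual (ξ η : H) : vecFunctional M ξ η ∈ predual M :=
  Submodule.le_topologicalClosure _ (Submodule.subset_span ⟨ξ, η, rfl⟩)

instance (priority := 10000) : NormedAddCommGroup ↥(predual M) := inferInstance
instance (priority := 10000) : NormedSpace ℂ ↥(predual M) := inferInstance
instance (priority := 10000) : NormedSpace ℝ ↥(predual M) := inferInstance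
instance (priority := 10000) : NormedAddCommGroup (↥(predual M) →L[ℂ] ℂ) := inferInstance
instance (priority := 10000) : NormedSpace ℂ (↥(predual M) →L[ℂ] ℂ) := inferInstance

/-- a projection belonging to `M` -/
def IsProjectionIn (p : H →L[ℂ] H) : Prop := p ∈ M ∧ IsSelfAdjoint p ∧ p * p = p

/-- `M` is σ-finite: every family of pairwise orthogonal nonzero projections in `M`
is countable. -/
def SigmaFinite : Prop :=
  ∀ P : Set (H →L[ℂ] H),
    (∀ p ∈ P, IsProjectionIn M p ∧ p ≠ 0) →
    (∀ p ∈ P, ∀ q ∈ P, p ≠ q → p * q = 0) →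
    P.Countable

/-- A projection `q ∈ M` is σ-finite if every family of pairwise orthogonal nonzero
projections `p ∈ M` with `p = q p q` is countable. -/
def IsSigmaFiniteProjection (q : H →L[ℂ] H) : Prop :=
  IsProjectionIn M q ∧
    ∀ P : Set (H →L[ℂ] H),
      (∀ p ∈ P, IsProjectionIn M p ∧ p ≠ 0 ∧ p = q * p * q) →
      (∀ p ∈ P, ∀ r ∈ P, p ≠ r → p * r = 0) →
      P.Countable

/-- `ξ` is a generating vector for the projection `p ∈ M`:
the set `M'ξ = {a ξ : a ∈ M'}` is dense in `pH`, the range of `p`. -/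
def IsGeneratingVector (p : H →L[ℂ] H) (ξ : H) : Prop :=
  closure {v : H | ∃ a ∈ M.commutant, v = a ξ} = Set.range p

/-- a cyclic projection in `M` -/
def IsCyclicProjection (p : H →L[ℂ] H) : Prop :=
  IsProjectionIn M p ∧ ∃ ξ : H, IsGeneratingVector M p ξ

/-- The self-adjoint part `M_*^{sa}` of the predual: those `ω ∈ M_*` with
`ω (x*) = conj (ω x)` for all `x ∈ M`; a real-linear subspace of `M_*`. -/
def predualSA : Submodule ℝ ↥(predual M) where
  carrier := {ω | ∀ (x : H →L[ℂ] H) (hx : x ∈ M),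
    (ω : ↥(carrier M) →L[ℂ] ℂ) ⟨star x, (mem_carrier M).mpr (star_mem hx)⟩ =
      conj ((ω : ↥(carrier M) →L[ℂ] ℂ) ⟨x, hx⟩)}
  add_mem' := by
    intro a b ha hb x hx
    simp only [Submodule.coe_add, ContinuousLinearMap.add_apply, ha x hx, hb x hx, map_add]
  zero_mem' := by
    intro x hx
    simp only [ZeroMemClass.coe_zero, ContinuousLinearMap.zero_apply, map_zero]
  smul_mem' := by
    intro r ω hω x hx
    simp only [SetLike.val_smul_of_tower, ContinuousLinearMap.coe_smul', Pi.smul_apply, hω x hx]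
    rw [show (conj ((ω : ↥(carrier M) →L[ℂ] ℂ) ⟨x, hx⟩)) = star ((ω : ↥(carrier M) →L[ℂ] ℂ) ⟨x, hx⟩) from rfl,
      show (conj (r • (ω : ↥(carrier M) →L[ℂ] ℂ) ⟨x, hx⟩)) = star (r • (ω : ↥(carrier M) →L[ℂ] ℂ) ⟨x, hx⟩) from rfl,
      star_smul, star_trivial r]

instance (priority := 10000) : NormedAddCommGroup ↥(predualSA M) := inferInstance
instance (priority := 10000) : NormedSpace ℝ ↥(predualSA M) := inferInstance
instance (priority := 10000) : NormedAddCommGroup (↥(predualSA M) →L[ℝ] ℝ) := inferInstance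
instance (priority := 10000) : NormedSpace ℝ (↥(predualSA M) →L[ℝ] ℝ) := inferInstance


section InnerProductSpace

variable {𝕜 E ι : Type*} [RCLike 𝕜] [NormedAddCommGroup E] [InnerProductSpace 𝕜 E]

/-- Normalising the nonzero members gives an orthonormal family, to which Bessel's inequality
applies. -/
theorem countable_setOf_inner_ne_zero_of_pairwise_inner_eq_zero {v : ι → E}
    (hv : Pairwise fun i j => inner 𝕜 (v i) (v j) = 0) (x : E) :
    {i | inner 𝕜 (v i) x ≠ 0}.Countable := by
  let e : {i // v i ≠ 0} → E := fun i => (‖v i‖⁻¹ : 𝕜) • v i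
  have he : Orthonormal 𝕜 e := by
    refine ⟨fun i => norm_smul_inv_norm i.2, fun i j hij => ?_⟩
    simp only [e, inner_smul_left, inner_smul_right, hv (Subtype.coe_ne_coe.mpr hij), mul_zero]
  have hcount : {i | inner 𝕜 (e i) x ≠ 0}.Countable := by
    simpa [Function.support] using (he.inner_products_summable x).countable_support
  refine (hcount.image Subtype.val).mono fun i hi => ?_
  have hvi : v i ≠ 0 := fun h => hi (by simp [h])
  refine ⟨⟨i, hvi⟩, ?_, rfl⟩
  simpa [e, inner_smul_left, hvi] using hi

variable [CompleteSpace E]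

theorem countable_setOf_apply_ne_zero_of_isStarProjection {p : ι → E →L[𝕜] E}
    (hp : ∀ i, IsStarProjection (p i)) (horth : Pairwise fun i j => p i * p j = 0) (x : E) :
    {i | p i x ≠ 0}.Countable := by
  have hsymm : ∀ i u v, inner 𝕜 (p i u) v = inner 𝕜 u (p i v) := fun i =>
    (hp i).isSelfAdjoint.isSymmetric
  have hinner : ∀ i, inner 𝕜 (p i x) x = (‖p i x‖ : 𝕜) ^ 2 := fun i => by
    have hpp : p i (p i x) = p i x := DFunLike.congr_fun (hp i).isIdempotentElem.eq x
    rw [← inner_self_eq_norm_sq_to_K, ← hsymm, hpp]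
  have hv : Pairwise fun i j => inner 𝕜 (p i x) (p j x) = 0 := fun i j hij => by
    have hpp : p i (p j x) = 0 := DFunLike.congr_fun (horth hij) x
    exact (hsymm i x (p j x)).trans (by rw [hpp, inner_zero_right])
  refine (countable_setOf_inner_ne_zero_of_pairwise_inner_eq_zero hv x).mono fun i hi => ?_
  simpa [hinner] using hi

end InnerProductSpace

section Commutant

variable {M}

theorem IsGeneratingVector.mul_eq_zero_of_apply_eq_zero {p y : H →L[ℂ] H} {ξ : H}
    (hξ : IsGeneratingVector M p ξ) (hy : y ∈ M) (hyξ : y ξ = 0) : y * p = 0 := by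
  have hrange : Set.range p ⊆ {v | y v = 0} := by
    rw [← hξ]
    refine closure_minimal ?_ (isClosed_eq y.continuous continuous_const)
    rintro _ ⟨a, ha, rfl⟩
    have hcomm : y * a = a * y := VonNeumannAlgebra.mem_commutant_iff.mp ha y hy
    have hya : y (a ξ) = a (y ξ) := DFunLike.congr_fun hcomm ξ
    show y (a ξ) = 0
    rw [hya, hyξ, map_zero]
  ext v
  exact hrange ⟨v, rfl⟩

theorem countable_setOf_mul_mul_ne_zero_of_isGeneratingVector {Λ : Type*}
    {p : Λ → H →L[ℂ] H} (hpM : ∀ m, p m ∈ M) (hp : ∀ m, IsStarProjection (p m))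
    (horth : Pairwise fun l m => p l * p m = 0) {q : H →L[ℂ] H} {ξ : H}
    (hξ : IsGeneratingVector M q ξ) {y : H →L[ℂ] H} (hy : y ∈ M) :
    {m | p m * y * q ≠ 0}.Countable :=
  (countable_setOf_apply_ne_zero_of_isStarProjection hp horth (y ξ)).mono fun m hm hm0 =>
    hm (hξ.mul_eq_zero_of_apply_eq_zero (mul_mem (hpM m) hy) hm0)

end Commutant

theorem countable_nonorthogonal_of_cyclic_family
    {Λ : Type*} (p : Λ → (H →L[ℂ] H))
    (hcyc : ∀ l, IsCyclicProjection M (p l))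
    (horth : ∀ l m, l ≠ m → p l * p m = 0)
    (x : H →L[ℂ] H) (hx : x ∈ M) (l : Λ) :
    {m : Λ | p l * x * p m ≠ 0}.Countable ∧ {m : Λ | p m * x * p l ≠ 0}.Countable := by
  have hpM : ∀ m, p m ∈ M := fun m => (hcyc m).1.1
  have hp : ∀ m, IsStarProjection (p m) := fun m => ⟨(hcyc m).1.2.2, (hcyc m).1.2.1⟩
  obtain ⟨ξ, hξ⟩ := (hcyc l).2
  have hcount : ∀ y ∈ M, {m | p m * y * p l ≠ 0}.Countable := fun y hy =>
    countable_setOf_mul_mul_ne_zero_of_isGeneratingVector hpM hp horth hξ hy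
  have hstar : ∀ m, star (p l * x * p m) = p m * star x * p l := fun m => by
    rw [star_mul, star_mul, (hp m).isSelfAdjoint.star_eq, (hp l).isSelfAdjoint.star_eq, mul_assoc]
  refine ⟨(hcount (star x) (star_mem hx)).mono fun m hm => ?_, hcount x hx⟩
  rwa [Set.mem_ofPred_eq, ← hstar, star_ne_zero]

end Paper
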